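/- Let u be a pure nonscalar element of R = k⟨X⟩ * k[Y], i.e., u ∈ k[Y] \ k. Then the centralizer of u in R is exactly k[Y]. -/

import Mathlib

/-- Words over `X ⊔ Y`. -/
abbrev FM (X Y : Type) := FreeMonoid (X ⊕ Y)

/-- Swapping two adjacent `Y`-letters. -/
def yRel (X Y : Type) : FM X Y → FM X Y → Prop := fun a b =>
  ∃ (u v : FM X Y) (y₁ y₂ : Y),
    a = u * FreeMonoid.of (Sum.inr y₁) * FreeMonoid.of (Sum.inr y₂) * v ∧
    b = u * FreeMonoid.of (Sum.inr y₂) * FreeMonoid.of (Sum.inr y₁) * v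

/-- The congruence generated by swaps of adjacent `Y`-letters. -/
def coCon (X Y : Type) : Con (FM X Y) := conGen (yRel X Y)

/-- The coproduct monoid `⟨X⟩ * [Y]`. -/
abbrev CoprodM (X Y : Type) := (coCon X Y).Quotient

/-- Length descends to the quotient. -/
def lenHom (X Y : Type) : CoprodM X Y →* Multiplicative ℕ :=
  Con.lift _ (FreeMonoid.lift fun _ => Multiplicative.ofAdd 1) (by
    refine Con.conGen_le.mpr ?_
    rintro a b ⟨u, v, y₁, y₂, rfl, rfl⟩
    simp [Con.ker_rel, map_mul])

/-- Length of an element of the coproduct monoid. -/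
def len {X Y : Type} (w : CoprodM X Y) : ℕ := Multiplicative.toAdd (lenHom X Y w)

/-- A monoid recording the commuting prefix and suffix. -/
inductive PS (Y : Type) where
  | pure : Multiset Y → PS Y
  | mixed : Multiset Y → Multiset Y → PS Y

def PS.mul {Y : Type} : PS Y → PS Y → PS Y
  | .pure c, .pure d => .pure (c + d)
  | .pure c, .mixed p s => .mixed (c + p) s
  | .mixed p s, .pure d => .mixed p (s + d)
  | .mixed p _, .mixed _ s' => .mixed p s'

instance {Y : Type} : Monoid (PS Y) where
  mul := PS.mul
  one := .pure 0
  mul_assoc a b c := by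
    rcases a <;> rcases b <;> rcases c <;>
      simp [(· * ·), PS.mul, add_assoc]
  one_mul a := by rcases a <;> simp [(· * ·), PS.mul]
  mul_one a := by rcases a <;> simp [(· * ·), PS.mul]

/-- The prefix/suffix data descends to the quotient. -/
def psHom (X Y : Type) : CoprodM X Y →* PS Y :=
  Con.lift _ (FreeMonoid.lift fun a =>
      match a with
      | Sum.inl _ => PS.mixed 0 0
      | Sum.inr y => PS.pure {y}) (by
    refine Con.conGen_le.mpr ?_
    rintro a b ⟨u, v, y₁, y₂, rfl, rfl⟩
    have key : (PS.pure {y₁} : PS Y) * PS.pure {y₂} = PS.pure {y₂} * PS.pure {y₁} := by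
      show PS.mul _ _ = PS.mul _ _
      simp [PS.mul, add_comm]
    simp only [Con.ker_rel, map_mul, FreeMonoid.lift_eval_of]
    rw [mul_assoc _ (PS.pure {y₁}), key, mul_assoc, ← mul_assoc, ← mul_assoc])

/-- The commuting prefix of an element, as a multiset of `Y`-variables. -/
def pre {X Y : Type} (w : CoprodM X Y) : Multiset Y :=
  match psHom X Y w with
  | .pure c => c
  | .mixed p _ => p

/-- The commuting suffix of an element, as a multiset of `Y`-variables. -/
def suf {X Y : Type} (w : CoprodM X Y) : Multiset Y :=
  match psHom X Y w with
  | .pure c => c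
  | .mixed _ s => s

/-- The canonical embedding of the free abelian monoid `[Y]` (words in `Y`). -/
def yEmb (X Y : Type) : FreeMonoid Y →* CoprodM X Y :=
  (Con.mk' (coCon X Y)).comp (FreeMonoid.map Sum.inr)

/-- An element is pure if it involves only `Y`-variables. -/
def IsPure {X Y : Type} (w : CoprodM X Y) : Prop := w ∈ MonoidHom.mrange (yEmb X Y)

/-- The pure element of the coproduct monoid corresponding to a multiset of
`Y`-variables. -/
noncomputable def pureElt {X Y : Type} (c : Multiset Y) : CoprodM X Y :=
  yEmb X Y (FreeMonoid.ofList c.toList)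

/-- The equivalence relation `∼`: equal lengths and either both pure, or equal
prefix lengths, equal middle parts and equal suffix lengths. -/
noncomputable def Sim {X Y : Type} (u v : CoprodM X Y) : Prop :=
  len u = len v ∧
  ((IsPure u ∧ IsPure v) ∨
    (¬ IsPure u ∧ ¬ IsPure v ∧
      Multiset.card (pre u) = Multiset.card (pre v) ∧
      Multiset.card (suf u) = Multiset.card (suf v) ∧
      ∃ m : CoprodM X Y,
        u = pureElt (pre u) * m * pureElt (suf u) ∧
        v = pureElt (pre v) * m * pureElt (suf v)))


/-!
Every element of the free product `⟨X⟩ * C` of a free monoid with a commutative monoid `C` is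
either an element of `C` or has a unique normal form `p · m · s` with `p, s ∈ C` and `m` a word
that begins and ends with an `X`-letter. For a fixed middle `m`, left and right multiplication by
`k[C]` act on the coefficients of the words `p · m · s` through the two factors of
`k[C × C] = k[C] ⊗ k[C]`. Hence if `a` commutes with `u ∈ k[C]`, the part `a_m` of `a` with middle
`m` satisfies `(u ⊗ 1 - 1 ⊗ u) a_m = 0`. When `C` has unique products `k[C × C]` is a domain, and
`u ⊗ 1 ≠ 1 ⊗ u` unless `u` is a scalar, so every `a_m` vanishes and `a ∈ k[C]`. The monoid
`⟨X⟩ * [Y]` is the case `C = Multiset Y`.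
-/

open MonoidAlgebra

theorem MonoidAlgebra.mem_range_mapDomain_iff {k M N : Type*} [Semiring k] {f : M → N}
    (hf : Function.Injective f) {x : MonoidAlgebra k N} :
    x ∈ Set.range (mapDomain f) ↔ ↑x.coeff.support ⊆ Set.range f := by
  classical
  refine ⟨?_, fun hx => ⟨comapDomain f hf x, mapDomain_comapDomain hx hf⟩⟩
  rintro ⟨y, rfl⟩
  exact (Finset.coe_subset.2 Finsupp.mapDomain_support).trans (by simp)

instance Multiset.instUniqueSums {Y : Type*} : UniqueSums (Multiset Y) := by
  classical exact (AddEquiv.uniqueSums_iff Multiset.toFinsupp).2 inferInstance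

/-- `mixed p (x₀, [(b₁, x₁), …, (bₙ, xₙ)]) s` stands for the word `p x₀ b₁ x₁ ⋯ bₙ xₙ s`. -/
inductive AltWord (X C : Type*) where
  | pure : C → AltWord X C
  | mixed : C → X × List (C × X) → C → AltWord X C

namespace AltWord

variable {X C : Type*}

theorem pure_injective : Function.Injective (pure : C → AltWord X C) :=
  fun _ _ h => by injection h

theorem mixed_injective (m : X × List (C × X)) :
    Function.Injective fun ps : C × C => (mixed ps.1 m ps.2 : AltWord X C) :=
  fun _ _ h => by injection h with h₁ _ h₂; exact Prod.ext h₁ h₂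

section Monoid

variable [Monoid C]

def joinMid (m : X × List (C × X)) (b : C) (m' : X × List (C × X)) : X × List (C × X) :=
  (m.1, m.2 ++ (b, m'.1) :: m'.2)

instance : Mul (AltWord X C) where
  mul
    | pure c, pure d => pure (c * d)
    | pure c, mixed p m s => mixed (c * p) m s
    | mixed p m s, pure d => mixed p m (s * d)
    | mixed p m s, mixed p' m' s' => mixed p (joinMid m (s * p') m') s'

@[simp] theorem pure_mul_pure (c d : C) : (pure c * pure d : AltWord X C) = pure (c * d) := rfl

@[simp] theorem pure_mul_mixed (c p : C) (m : X × List (C × X)) (s : C) :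
    (pure c * mixed p m s : AltWord X C) = mixed (c * p) m s := rfl

@[simp] theorem mixed_mul_pure (p : C) (m : X × List (C × X)) (s d : C) :
    (mixed p m s * pure d : AltWord X C) = mixed p m (s * d) := rfl

@[simp] theorem mixed_mul_mixed (p : C) (m : X × List (C × X)) (s p' : C)
    (m' : X × List (C × X)) (s' : C) :
    (mixed p m s * mixed p' m' s' : AltWord X C) = mixed p (joinMid m (s * p') m') s' := rfl

instance : Monoid (AltWord X C) where
  one := pure 1
  mul_assoc a b c := by
    rcases a <;> rcases b <;> rcases c <;> simp [joinMid, mul_assoc]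
  one_mul a := by
    change pure 1 * a = a
    rcases a <;> simp
  mul_one a := by
    change a * pure 1 = a
    rcases a <;> simp

def pureHom : C →* AltWord X C where
  toFun := pure
  map_one' := rfl
  map_mul' _ _ := rfl

section Lift

variable {M : Type*} [Monoid M] (f : X → M) (g : C →* M)

def liftMid (m : X × List (C × X)) : M :=
  f m.1 * (m.2.map fun bx => g bx.1 * f bx.2).prod

theorem liftMid_joinMid (m : X × List (C × X)) (b : C) (m' : X × List (C × X)) :
    liftMid f g (joinMid m b m') = liftMid f g m * (g b * liftMid f g m') := by
  simp [liftMid, joinMid, mul_assoc]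

def lift : AltWord X C →* M where
  toFun
    | pure c => g c
    | mixed p m s => g p * liftMid f g m * g s
  map_one' := g.map_one
  map_mul' a b := by
    rcases a <;> rcases b <;> simp [liftMid_joinMid, mul_assoc]

@[simp] theorem lift_pure (c : C) : lift f g (pure c) = g c := rfl

@[simp] theorem lift_mixed (p : C) (m : X × List (C × X)) (s : C) :
    lift f g (mixed p m s) = g p * liftMid f g m * g s := rfl

end Lift

end Monoid

variable {k : Type*}

section Semiring

variable [Semiring k]

noncomputable def restrictMid (m : X × List (C × X)) :
    MonoidAlgebra k (AltWord X C) →+ MonoidAlgebra k (C × C) :=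
  comapDomainAddMonoidHom _ (mixed_injective m)

@[simp] theorem coeff_restrictMid (m : X × List (C × X)) (F : MonoidAlgebra k (AltWord X C))
    (p s : C) : (restrictMid m F).coeff (p, s) = F.coeff (mixed p m s) :=
  rfl

theorem restrictMid_single_pure (m : X × List (C × X)) (c : C) (r : k) :
    restrictMid m (single (pure c) r) = 0 :=
  comapDomain_single_of_not_mem_range (by simp) (mixed_injective m)

theorem restrictMid_single_mixed (m : X × List (C × X)) (p s : C) (r : k) :
    restrictMid m (single (mixed p m s) r) = single (p, s) r :=
  comapDomain_single_map (fun ps : C × C => mixed ps.1 m ps.2) (mixed_injective m) (p, s) r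

theorem restrictMid_single_mixed_of_ne {m m' : X × List (C × X)} (h : m' ≠ m) (p s : C) (r : k) :
    restrictMid m (single (mixed p m' s) r) = 0 :=
  comapDomain_single_of_not_mem_range (by simp [Ne.symm h]) (mixed_injective m)

variable [Monoid C]

theorem restrictMid_mapDomain_pure_mul (m : X × List (C × X)) (u : MonoidAlgebra k C)
    (F : MonoidAlgebra k (AltWord X C)) :
    restrictMid m (mapDomainRingHom k pureHom u * F) =
      mapDomainRingHom k (MonoidHom.inl C C) u * restrictMid m F := by
  induction u using MonoidAlgebra.induction_linear with
  | zero => simp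
  | add u₁ u₂ h₁ h₂ => simp only [map_add, add_mul, h₁, h₂]
  | single c a =>
    induction F using MonoidAlgebra.induction_linear with
    | zero => simp
    | add F₁ F₂ h₁ h₂ => simp only [map_add, mul_add, h₁, h₂]
    | single w b =>
      cases w with
      | pure d => simp [pureHom, restrictMid_single_pure]
      | mixed p m' s =>
        simp only [mapDomainRingHom_apply, mapDomain_single, single_mul_single]
        obtain rfl | h := eq_or_ne m' m
        · simp [pureHom, restrictMid_single_mixed]
        · simp [pureHom, restrictMid_single_mixed_of_ne h]

theorem restrictMid_mul_mapDomain_pure (m : X × List (C × X)) (F : MonoidAlgebra k (AltWord X C))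
    (u : MonoidAlgebra k C) :
    restrictMid m (F * mapDomainRingHom k pureHom u) =
      restrictMid m F * mapDomainRingHom k (MonoidHom.inr C C) u := by
  induction u using MonoidAlgebra.induction_linear with
  | zero => simp
  | add u₁ u₂ h₁ h₂ => simp only [map_add, mul_add, h₁, h₂]
  | single c a =>
    induction F using MonoidAlgebra.induction_linear with
    | zero => simp
    | add F₁ F₂ h₁ h₂ => simp only [map_add, add_mul, h₁, h₂]
    | single w b =>
      cases w with
      | pure d => simp [pureHom, restrictMid_single_pure]
      | mixed p m' s =>
        simp only [mapDomainRingHom_apply, mapDomain_single, single_mul_single]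
        obtain rfl | h := eq_or_ne m' m
        · simp [pureHom, restrictMid_single_mixed]
        · simp [pureHom, restrictMid_single_mixed_of_ne h]

theorem mapDomain_inl_ne_mapDomain_inr {u : MonoidAlgebra k C} (hu : ∀ r : k, u ≠ r • 1) :
    mapDomainRingHom k (MonoidHom.inl C C) u ≠ mapDomainRingHom k (MonoidHom.inr C C) u := by
  intro h
  apply hu (u.coeff 1)
  ext c
  obtain rfl | hc := eq_or_ne c 1
  · simp [one_def]
  · have hl : (mapDomainRingHom k (MonoidHom.inl C C) u).coeff (c, 1) = u.coeff c :=
      Finsupp.mapDomain_apply (Prod.mk_left_injective 1) u.coeff c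
    have hr : (mapDomainRingHom k (MonoidHom.inr C C) u).coeff (c, 1) = 0 :=
      Finsupp.mapDomain_of_notMem_range _ _ (by simp [Ne.symm hc])
    rw [coeff_smul_apply, one_def, coeff_single, Finsupp.single_eq_of_ne hc, smul_zero, ← hl, h, hr]

end Semiring

theorem support_subset_range_pure_of_commute [CommRing k] [NoZeroDivisors k] [CommMonoid C]
    [UniqueProds C] {u : MonoidAlgebra k C} (hu : ∀ r : k, u ≠ r • 1)
    {A : MonoidAlgebra k (AltWord X C)}
    (h : A * mapDomainRingHom k pureHom u = mapDomainRingHom k pureHom u * A) :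
    ↑A.coeff.support ⊆ Set.range (pure : C → AltWord X C) := by
  rintro (_ | ⟨p, m, s⟩) hn
  · exact ⟨_, rfl⟩
  have hm : restrictMid m A = 0 := by
    have := congrArg (restrictMid m) h
    rw [restrictMid_mul_mapDomain_pure, restrictMid_mapDomain_pure_mul, mul_comm, ← sub_eq_zero,
      ← sub_mul] at this
    exact (mul_eq_zero.1 this).resolve_left (sub_ne_zero.2 (mapDomain_inl_ne_mapDomain_inr hu).symm)
  exact (Finsupp.mem_support_iff.1 hn (by rw [← coeff_restrictMid, hm]; rfl)).elim

end AltWord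

namespace CoprodM

variable {X Y : Type}

theorem yEmb_ofList_eq_of_perm {l l' : List Y} (h : l.Perm l') :
    yEmb X Y (FreeMonoid.ofList l) = yEmb X Y (FreeMonoid.ofList l') := by
  induction h with
  | nil => rfl
  | cons a _ ih => rw [FreeMonoid.ofList_cons, FreeMonoid.ofList_cons, map_mul, map_mul, ih]
  | swap a b l =>
    refine (Con.eq _).2 (ConGen.Rel.of _ _ ⟨1, FreeMonoid.map Sum.inr (FreeMonoid.ofList l), b, a,
      ?_, ?_⟩) <;> simp [FreeMonoid.ofList_cons, mul_assoc]
  | trans _ _ ih₁ ih₂ => rw [ih₁, ih₂]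

theorem pureElt_add (c d : Multiset Y) :
    (pureElt (c + d) : CoprodM X Y) = pureElt c * pureElt d := by
  rw [pureElt, pureElt, pureElt, ← map_mul, ← FreeMonoid.ofList_append]
  exact yEmb_ofList_eq_of_perm (by rw [← Multiset.coe_eq_coe, ← Multiset.coe_add]; simp)

noncomputable def pureHom : Multiplicative (Multiset Y) →* CoprodM X Y where
  toFun c := pureElt c.toAdd
  map_one' := by simp [pureElt]
  map_mul' _ _ := pureElt_add _ _

def xLetter (x : X) : CoprodM X Y := ((FreeMonoid.of (Sum.inl x) : FM X Y) : CoprodM X Y)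

def letterNF : X ⊕ Y → AltWord X (Multiplicative (Multiset Y))
  | .inl x => .mixed 1 (x, []) 1
  | .inr y => .pure (.ofAdd {y})

def nf : CoprodM X Y →* AltWord X (Multiplicative (Multiset Y)) :=
  Con.lift _ (FreeMonoid.lift letterNF) <| Con.conGen_le.mpr <| by
    rintro _ _ ⟨u, v, y₁, y₂, rfl, rfl⟩
    have hcomm : letterNF (X := X) (.inr y₁) * letterNF (.inr y₂) =
        letterNF (.inr y₂) * letterNF (.inr y₁) := by
      simp only [letterNF, AltWord.pure_mul_pure, mul_comm]
    simp only [Con.ker_rel, map_mul, FreeMonoid.lift_eval_of]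
    rw [mul_assoc (FreeMonoid.lift letterNF u), hcomm, ← mul_assoc]

theorem lift_nf (w : CoprodM X Y) : AltWord.lift xLetter pureHom (nf w) = w := by
  induction w using Con.induction_on with
  | H l =>
    have : ((AltWord.lift xLetter pureHom).comp nf).comp (coCon X Y).mk' = (coCon X Y).mk' := by
      refine FreeMonoid.hom_eq fun
        | .inl x => by
          change AltWord.lift xLetter pureHom (.mixed 1 (x, []) 1) = _
          simp [AltWord.liftMid, xLetter]
        | .inr y => by
          change AltWord.lift xLetter pureHom (.pure (.ofAdd {y})) = _
          simp [pureHom, pureElt, yEmb]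
    exact DFunLike.congr_fun this l

theorem nf_injective : Function.Injective (nf : CoprodM X Y →* _) :=
  Function.LeftInverse.injective lift_nf

theorem nf_yEmb (l : FreeMonoid Y) :
    nf (yEmb X Y l) = .pure (FreeMonoid.lift (fun y => Multiplicative.ofAdd ({y} : Multiset Y)) l) := by
  have : (nf.comp (yEmb X Y) : FreeMonoid Y →* _) =
      AltWord.pureHom.comp (FreeMonoid.lift fun y => Multiplicative.ofAdd ({y} : Multiset Y)) :=
    FreeMonoid.hom_eq fun y => rfl
  exact DFunLike.congr_fun this l

theorem nf_comp_pureHom : (nf (X := X)).comp (pureHom (Y := Y)) = AltWord.pureHom := by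
  ext c
  simp [pureHom, pureElt, nf_yEmb, AltWord.pureHom]

theorem pureHom_injective : Function.Injective (pureHom : Multiplicative (Multiset Y) →* CoprodM X Y) :=
  Function.Injective.of_comp (f := nf) (by
    rw [← MonoidHom.coe_comp, nf_comp_pureHom]; exact AltWord.pure_injective)

theorem isPure_iff_mem_range_pureHom (w : CoprodM X Y) : IsPure w ↔ w ∈ Set.range pureHom := by
  refine ⟨?_, fun ⟨c, hc⟩ => ⟨_, hc⟩⟩
  rintro ⟨l, rfl⟩
  refine ⟨FreeMonoid.lift (fun y => Multiplicative.ofAdd ({y} : Multiset Y)) l, nf_injective ?_⟩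
  rw [← MonoidHom.comp_apply, nf_comp_pureHom, nf_yEmb]
  rfl

theorem mem_range_mapDomain_pureHom_of_commute {k : Type} [CommRing k] [NoZeroDivisors k]
    {u : MonoidAlgebra k (Multiplicative (Multiset Y))} (hu : ∀ r : k, u ≠ r • 1)
    {a : MonoidAlgebra k (CoprodM X Y)}
    (h : a * mapDomainRingHom k pureHom u = mapDomainRingHom k pureHom u * a) :
    a ∈ Set.range (mapDomainRingHom k pureHom) := by
  have hnf : (mapDomainRingHom k nf).comp (mapDomainRingHom k (pureHom (X := X) (Y := Y))) =
      mapDomainRingHom k AltWord.pureHom := by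
    rw [← mapDomainRingHom_comp, nf_comp_pureHom]
  have hcomm := congrArg (mapDomainRingHom k nf) h
  rw [map_mul, map_mul, ← RingHom.comp_apply, hnf] at hcomm
  obtain ⟨a', ha'⟩ := (mem_range_mapDomain_iff AltWord.pure_injective).2
    (AltWord.support_subset_range_pure_of_commute hu hcomm)
  refine ⟨a', mapDomain_injective nf_injective ?_⟩
  rw [← mapDomainRingHom_apply, ← RingHom.comp_apply, hnf]
  exact ha'

end CoprodM

/-- The centralizer of a pure nonscalar element of `k⟨X⟩ * k[Y]` is exactly
`k[Y]`. -/
theorem coprod_centralizer_of_pure {X Y k : Type} [Field k]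
    (u : MonoidAlgebra k (CoprodM X Y))
    (hu_pure : ∀ w ∈ u.coeff.support, IsPure w)
    (hu_ns : ∀ lam : k, u ≠ lam • (1 : MonoidAlgebra k (CoprodM X Y))) :
    ∀ a : MonoidAlgebra k (CoprodM X Y),
      a * u = u * a ↔ ∀ w ∈ a.coeff.support, IsPure w := by
  have hpure (b : MonoidAlgebra k (CoprodM X Y)) :
      (∀ w ∈ b.coeff.support, IsPure w) ↔ b ∈ Set.range (mapDomainRingHom k CoprodM.pureHom) := by
    change _ ↔ b ∈ Set.range (mapDomain CoprodM.pureHom)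
    rw [mem_range_mapDomain_iff CoprodM.pureHom_injective]
    simp only [Set.subset_def, Finset.mem_coe, CoprodM.isPure_iff_mem_range_pureHom]
  intro a
  obtain ⟨u, rfl⟩ := (hpure u).1 hu_pure
  have hu : ∀ r : k, u ≠ r • 1 := by
    rintro r rfl
    exact hu_ns r (by simp [one_def])
  rw [hpure a]
  refine ⟨CoprodM.mem_range_mapDomain_pureHom_of_commute hu, ?_⟩
  rintro ⟨a, rfl⟩
  rw [← map_mul, ← map_mul, mul_comm]
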